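/- For every natural number N ≥ 1, the cardinality of the set {f : Fin N → Fin 4 | f is not identically 0 and the number of coordinates a with f a = 3 is even} equals 2^(N−1) · (2^N + 1) − 1. -/
import Mathlib

open Finset

lemma key : ∀ N : ℕ, 2 * (univ.filter (fun f : Fin N → Fin 4 =>
    Even (univ.filter (fun a : Fin N => f a = 3)).card)).card = 4 ^ N + 2 ^ N := by
  intro N
  induction N with
  | zero => decide
  | succ n ih =>
    let e : Fin 4 × (Fin n → Fin 4) ≃ (Fin (n+1) → Fin 4) :=
      ⟨fun p => Fin.cons p.1 p.2, fun f => (f 0, fun i => f i.succ),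
       fun p => by simp, fun f => Fin.cons_self_tail f⟩
    have he : ∀ p : Fin 4 × (Fin n → Fin 4), e p = Fin.cons p.1 p.2 := by
      intro p; rfl
    have hcount : ∀ (x : Fin 4) (f : Fin n → Fin 4),
        (univ.filter (fun a : Fin (n+1) => Fin.cons (α := fun _ => Fin 4) x f a = 3)).card =
        (if x = 3 then 1 else 0) + (univ.filter (fun a : Fin n => f a = 3)).card := by
      intro x f
      rw [Finset.card_filter, Finset.card_filter, Fin.sum_univ_succ]
      simp
    set E := #(filter (fun f : Fin n → Fin 4 => Even #(filter (fun a => f a = 3) univ)) univ) with hE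
    set O := #(filter (fun f : Fin n → Fin 4 => Odd #(filter (fun a => f a = 3) univ)) univ) with hO
    have hsum : ∑ p : Fin 4 × (Fin n → Fin 4),
        (if Even (univ.filter (fun a : Fin (n+1) => e p a = 3)).card then 1 else 0) = 3 * E + O := by
      have step : ∀ p : Fin 4 × (Fin n → Fin 4),
          (if Even (univ.filter (fun a : Fin (n+1) => e p a = 3)).card then 1 else 0)
          = if p.1 = 3 then (if Odd (univ.filter (fun a : Fin n => p.2 a = 3)).card then 1 else 0)
            else (if Even (univ.filter (fun a : Fin n => p.2 a = 3)).card then 1 else 0) := by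
        intro p
        rw [he p, hcount]
        by_cases h : p.1 = 3 <;> by_cases h2 : Even (univ.filter (fun a : Fin n => p.2 a = 3)).card <;>
          simp [h, h2, parity_simps, ← Nat.not_even_iff_odd]
      simp only [step]
      rw [Fintype.sum_prod_type, Fin.sum_univ_four]
      norm_num [show (0:Fin 4) ≠ 3 by decide, show (1:Fin 4) ≠ 3 by decide, show (2:Fin 4) ≠ 3 by decide]
      ring
    have hEO : E + O = 4 ^ n := by
      have h := Finset.card_filter_add_card_filter_not
        (s := (univ : Finset (Fin n → Fin 4)))
        (p := fun f => Even #(filter (fun a => f a = 3) univ))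
      simp only [Nat.not_even_iff_odd] at h
      rw [hE, hO, h, Finset.card_univ]
      simp [Fintype.card_fun]
    rw [Finset.card_filter]
    rw [← Equiv.sum_comp e (fun f => if Even (univ.filter (fun a : Fin (n+1) => f a = 3)).card then 1 else 0)]
    rw [hsum]
    have h2 : 2 * (3 * E + O) = 2 * (2 * E) + 2 * (E + O) := by ring
    rw [h2, ih, hEO]
    ring

theorem stmt8 : ∀ N : ℕ, 1 ≤ N →
    (Finset.univ.filter (fun f : Fin N → Fin 4 =>
        f ≠ (fun _ => 0) ∧ Even (Finset.univ.filter (fun a : Fin N => f a = 3)).card)).card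
      = 2 ^ (N - 1) * (2 ^ N + 1) - 1 := by
  intro N hN
  obtain ⟨m, rfl⟩ : ∃ m, N = m + 1 := ⟨N - 1, by omega⟩
  have hkey := key (m + 1)
  have h2 : 2 * (2 ^ (m + 1 - 1) * (2 ^ (m + 1) + 1)) = 4 ^ (m + 1) + 2 ^ (m + 1) := by
    simp only [Nat.add_sub_cancel]
    have : (4:ℕ) ^ (m+1) = 2 ^ (m+1) * 2 ^ (m+1) := by
      norm_num [← mul_pow]
    rw [this, pow_succ]
    ring
  have hE : #(filter (fun f : Fin (m+1) → Fin 4 => Even #(filter (fun a => f a = 3) univ)) univ)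
      = 2 ^ (m + 1 - 1) * (2 ^ (m + 1) + 1) :=
    Nat.eq_of_mul_eq_mul_left (by norm_num) (hkey.trans h2.symm)
  have hsplit : (univ.filter (fun f : Fin (m+1) → Fin 4 =>
        f ≠ (fun _ => 0) ∧ Even (univ.filter (fun a : Fin (m+1) => f a = 3)).card)) =
      (univ.filter (fun f : Fin (m+1) → Fin 4 =>
        Even (univ.filter (fun a : Fin (m+1) => f a = 3)).card)).erase (fun _ => 0) := by
    ext f
    simp [Finset.mem_erase, and_comm]
  rw [hsplit, Finset.card_erase_of_mem, hE]
  simp
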